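/- Let n ≥ 3. Then ⋂_{v ∈ ℝⁿ} ⋃_{ξ ∈ v^⊥, ξ ≠ 0} Ker(𝔸[ξ]) = {0}; that is, if a matrix A ∈ M_sym0 has the property that for every v ∈ ℝⁿ there exists a nonzero ξ orthogonal to v with 𝔸[ξ]A = 0, then A = 0. -/

import Mathlib

/-- Euclidean dot product on `Fin n → ℝ`. -/
def dotp {n : ℕ} (a b : Fin n → ℝ) : ℝ := ∑ i, a i * b i

/-- Matrix–vector multiplication. -/
def mulv {n : ℕ} (M : Fin n → Fin n → ℝ) (v : Fin n → ℝ) (i : Fin n) : ℝ := ∑ j, M i j * v j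

/-- The symbol `𝔸[ξ]M := |ξ|²(Mξ⊗ξ + ξ⊗Mξ) − |ξ|⁴·M
  − ((ξᵀMξ)/(n−1))·[(n−2)·ξ⊗ξ + |ξ|²·Id]`. -/
noncomputable def symA (n : ℕ) (ξ : Fin n → ℝ) (M : Fin n → Fin n → ℝ) (i j : Fin n) : ℝ :=
  dotp ξ ξ * (mulv M ξ i * ξ j + ξ i * mulv M ξ j) - (dotp ξ ξ) ^ 2 * M i j
    - (dotp ξ (mulv M ξ)) / ((n : ℝ) - 1) *
        (((n : ℝ) - 2) * (ξ i * ξ j) + dotp ξ ξ * (if i = j then 1 else 0))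

/-!
For `u ⊥ ξ`, the equation `𝔸[ξ]A = 0` says that the quadratic form of `A` on `ξ^⊥` is
`-(ξᵀAξ) / ((n - 1)|ξ|²)` times `|u|²`; if moreover `ξᵀAξ = 0`, it says `|ξ|²A = Aξ⊗ξ + ξ⊗Aξ`.

Take `ξ₁ ≠ 0`, then `ξ₂ ⊥ ξ₁` and `ξ₃ ⊥ ξ₁ + ξ₂` in the respective kernels. Testing the condition
for `ξ₂` on `ξ₁` and the one for `ξ₁` on `ξ₂` gives a linear system in `ξ₁ᵀAξ₁, ξ₂ᵀAξ₂` with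
determinant `(n - 1)² - 1 ≠ 0`, so both vanish and `A = c(ξ₁⊗ξ₂ + ξ₂⊗ξ₁)`. With
`α = ⟨ξ₁, ξ₃⟩ = -⟨ξ₂, ξ₃⟩`, testing the condition for `ξ₃` on `ξ₁ + ξ₂` gives
`c((n - 1)|ξ₁|²|ξ₂|²|ξ₃|² - α²(|ξ₁|² + |ξ₂|²)) = 0`, and the bracket is positive by Bessel's
inequality `α²(|ξ₁|² + |ξ₂|²) ≤ |ξ₁|²|ξ₂|²|ξ₃|²` because `n - 1 > 1`.
-/

open Matrix

section

variable {ι : Type*} [Fintype ι]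

lemma dotProduct_self_nonneg (v : ι → ℝ) : 0 ≤ v ⬝ᵥ v := by
  simpa using dotProduct_self_star_nonneg v

lemma dotProduct_self_pos {v : ι → ℝ} (hv : v ≠ 0) : 0 < v ⬝ᵥ v := by
  simpa using dotProduct_self_star_pos_iff.2 hv

lemma dotProduct_smul_mulVec_self (r : ℝ) (M : Matrix ι ι ℝ) (u : ι → ℝ) :
    u ⬝ᵥ (r • M) *ᵥ u = r * (u ⬝ᵥ M *ᵥ u) := by
  rw [smul_mulVec, dotProduct_smul, smul_eq_mul]

lemma dotProduct_vecMulVec_add_mulVec_self (a b u : ι → ℝ) :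
    u ⬝ᵥ (vecMulVec a b + vecMulVec b a) *ᵥ u = 2 * (a ⬝ᵥ u) * (b ⬝ᵥ u) := by
  rw [add_mulVec, vecMulVec_mulVec, vecMulVec_mulVec, op_smul_eq_smul, op_smul_eq_smul,
    dotProduct_add, dotProduct_smul, dotProduct_smul, smul_eq_mul, smul_eq_mul,
    dotProduct_comm u a, dotProduct_comm u b]
  ring

lemma sq_dotProduct_add_sq_dotProduct_le {ξ₁ ξ₂ : ι → ℝ} (h₁₂ : ξ₁ ⬝ᵥ ξ₂ = 0)
    (x : ι → ℝ) :
    (ξ₁ ⬝ᵥ x) ^ 2 * (ξ₂ ⬝ᵥ ξ₂) + (ξ₂ ⬝ᵥ x) ^ 2 * (ξ₁ ⬝ᵥ ξ₁) ≤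
      (ξ₁ ⬝ᵥ ξ₁) * (ξ₂ ⬝ᵥ ξ₂) * (x ⬝ᵥ x) := by
  rcases eq_or_ne ξ₁ 0 with rfl | hξ₁
  · simp
  rcases eq_or_ne ξ₂ 0 with rfl | hξ₂
  · simp
  set s₁ := ξ₁ ⬝ᵥ ξ₁
  set s₂ := ξ₂ ⬝ᵥ ξ₂
  -- `s₁ s₂` times the component of `x` orthogonal to `ξ₁` and `ξ₂`
  set r := (s₁ * s₂) • x - ((ξ₁ ⬝ᵥ x) * s₂) • ξ₁ - ((ξ₂ ⬝ᵥ x) * s₁) • ξ₂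
  have hr :
      r ⬝ᵥ r = s₁ * s₂ * (s₁ * s₂ * (x ⬝ᵥ x) - (ξ₁ ⬝ᵥ x) ^ 2 * s₂ - (ξ₂ ⬝ᵥ x) ^ 2 * s₁) := by
    have h₂₁ : ξ₂ ⬝ᵥ ξ₁ = 0 := by rwa [dotProduct_comm]
    simp only [r, sub_dotProduct, dotProduct_sub, smul_dotProduct, dotProduct_smul, smul_eq_mul,
      h₁₂, h₂₁, dotProduct_comm x]
    ring
  have hs : 0 < s₁ * s₂ := mul_pos (dotProduct_self_pos hξ₁) (dotProduct_self_pos hξ₂)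
  have hD := nonneg_of_mul_nonneg_right (hr ▸ dotProduct_self_nonneg r) hs
  linarith

end

section

variable {n : ℕ}

lemma dotp_eq_dotProduct (a b : Fin n → ℝ) : dotp a b = a ⬝ᵥ b := rfl

lemma mulv_eq_mulVec (M : Matrix (Fin n) (Fin n) ℝ) (v : Fin n → ℝ) : mulv M v = M *ᵥ v := rfl

lemma of_symA_eq (ξ : Fin n → ℝ) (M : Matrix (Fin n) (Fin n) ℝ) :
    of (symA n ξ M) = (ξ ⬝ᵥ ξ) • (vecMulVec (M *ᵥ ξ) ξ + vecMulVec ξ (M *ᵥ ξ)) - (ξ ⬝ᵥ ξ) ^ 2 • M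
      - (ξ ⬝ᵥ M *ᵥ ξ / ((n : ℝ) - 1)) • (((n : ℝ) - 2) • vecMulVec ξ ξ + (ξ ⬝ᵥ ξ) • 1) := by
  ext i j
  simp only [symA, of_apply, dotp_eq_dotProduct, mulv_eq_mulVec, Matrix.sub_apply,
    Matrix.add_apply, Matrix.smul_apply, vecMulVec_apply, one_apply, smul_eq_mul]

lemma dotProduct_symA_mulVec_self {ξ u : Fin n → ℝ} (M : Matrix (Fin n) (Fin n) ℝ)
    (hu : ξ ⬝ᵥ u = 0) :
    u ⬝ᵥ of (symA n ξ M) *ᵥ u =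
      -(ξ ⬝ᵥ ξ) * ((ξ ⬝ᵥ ξ) * (u ⬝ᵥ M *ᵥ u) + ξ ⬝ᵥ M *ᵥ ξ / ((n : ℝ) - 1) * (u ⬝ᵥ u)) := by
  have hu' : u ⬝ᵥ ξ = 0 := by rwa [dotProduct_comm]
  simp only [of_symA_eq, sub_mulVec, add_mulVec, smul_mulVec, vecMulVec_mulVec, op_smul_eq_smul,
    one_mulVec, dotProduct_sub, dotProduct_add, dotProduct_smul, hu, hu', smul_eq_mul]
  ring

variable {ξ ξ₁ ξ₂ ξ₃ u : Fin n → ℝ} {A : Matrix (Fin n) (Fin n) ℝ}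

lemma dotProduct_mulVec_self_of_symA_eq_zero (hn : n ≠ 1) (hA : symA n ξ A = 0)
    (hu : ξ ⬝ᵥ u = 0) :
    ((n : ℝ) - 1) * (ξ ⬝ᵥ ξ) * (u ⬝ᵥ A *ᵥ u) = -(ξ ⬝ᵥ A *ᵥ ξ) * (u ⬝ᵥ u) := by
  rcases eq_or_ne ξ 0 with rfl | hξ
  · simp
  have hn' : (n : ℝ) - 1 ≠ 0 := sub_ne_zero.2 (by exact_mod_cast hn)
  have hs : ξ ⬝ᵥ ξ ≠ 0 := by simpa using hξ
  have h := dotProduct_symA_mulVec_self A hu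
  rw [hA, of_zero, zero_mulVec, dotProduct_zero, eq_comm, neg_mul, neg_eq_zero,
    mul_eq_zero, or_iff_right hs] at h
  field_simp at h
  linear_combination h

lemma smul_eq_of_symA_eq_zero (hA : symA n ξ A = 0) (ht : ξ ⬝ᵥ A *ᵥ ξ = 0) :
    (ξ ⬝ᵥ ξ) • A = vecMulVec (A *ᵥ ξ) ξ + vecMulVec ξ (A *ᵥ ξ) := by
  rcases eq_or_ne ξ 0 with rfl | hξ
  · simp
  have h := of_symA_eq ξ A
  rw [hA, ht, zero_div, zero_smul, sub_zero, of_zero, eq_comm, sub_eq_zero, sq, ← smul_smul] at h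
  exact smul_right_injective _ (by simpa using hξ) h.symm

lemma dotProduct_mulVec_self_eq_zero_of_orthogonal (hn : 3 ≤ n) (h₁ : symA n ξ₁ A = 0)
    (h₂ : symA n ξ₂ A = 0) (h₁₂ : ξ₁ ⬝ᵥ ξ₂ = 0) (hξ₂ : ξ₂ ≠ 0) : ξ₁ ⬝ᵥ A *ᵥ ξ₁ = 0 := by
  have hn' : (3 : ℝ) ≤ n := by exact_mod_cast hn
  have h₂₁ : ξ₂ ⬝ᵥ ξ₁ = 0 := by rwa [dotProduct_comm]
  have E₁ := dotProduct_mulVec_self_of_symA_eq_zero (by omega) h₂ h₂₁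
  have E₂ := dotProduct_mulVec_self_of_symA_eq_zero (by omega) h₁ h₁₂
  have key : (((n : ℝ) - 1) ^ 2 - 1) * (ξ₂ ⬝ᵥ ξ₂) * (ξ₁ ⬝ᵥ A *ᵥ ξ₁) = 0 := by
    linear_combination ((n : ℝ) - 1) * E₁ - E₂
  have hpos : 0 < ((n : ℝ) - 1) ^ 2 - 1 := by nlinarith
  simpa [hpos.ne', hξ₂] using key

lemma smul_eq_vecMulVec_add_of_orthogonal (hn : 3 ≤ n) (h₁ : symA n ξ₁ A = 0)
    (h₂ : symA n ξ₂ A = 0) (h₁₂ : ξ₁ ⬝ᵥ ξ₂ = 0) (hξ₁ : ξ₁ ≠ 0) (hξ₂ : ξ₂ ≠ 0) :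
    ((ξ₁ ⬝ᵥ ξ₁) * (ξ₂ ⬝ᵥ ξ₂)) • A =
      ((A *ᵥ ξ₁) ⬝ᵥ ξ₂) • (vecMulVec ξ₁ ξ₂ + vecMulVec ξ₂ ξ₁) := by
  have h₂₁ : ξ₂ ⬝ᵥ ξ₁ = 0 := by rwa [dotProduct_comm]
  have hA₁ := smul_eq_of_symA_eq_zero h₁
    (dotProduct_mulVec_self_eq_zero_of_orthogonal hn h₁ h₂ h₁₂ hξ₂)
  have hA₂ := smul_eq_of_symA_eq_zero h₂
    (dotProduct_mulVec_self_eq_zero_of_orthogonal hn h₂ h₁ h₂₁ hξ₁)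
  have hw : (ξ₁ ⬝ᵥ ξ₁) • A *ᵥ ξ₂ = ((A *ᵥ ξ₁) ⬝ᵥ ξ₂) • ξ₁ := by
    rw [← smul_mulVec, hA₁, add_mulVec, vecMulVec_mulVec, vecMulVec_mulVec, h₁₂,
      op_smul_eq_smul, op_smul_eq_smul, zero_smul, zero_add]
  rw [mul_smul, hA₂, smul_add, ← smul_vecMulVec, ← vecMulVec_smul, hw, smul_vecMulVec,
    vecMulVec_smul, smul_add]

lemma eq_zero_of_smul_eq_vecMulVec_add (hn : 3 ≤ n) (hξ₁ : ξ₁ ≠ 0) (hξ₂ : ξ₂ ≠ 0)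
    (hξ₃ : ξ₃ ≠ 0) (h₁₂ : ξ₁ ⬝ᵥ ξ₂ = 0) (h₃ : ξ₃ ⬝ᵥ (ξ₁ + ξ₂) = 0) (hA₃ : symA n ξ₃ A = 0)
    {c : ℝ} (hA : ((ξ₁ ⬝ᵥ ξ₁) * (ξ₂ ⬝ᵥ ξ₂)) • A = c • (vecMulVec ξ₁ ξ₂ + vecMulVec ξ₂ ξ₁)) :
    c = 0 := by
  have hQ (u : Fin n → ℝ) :
      (ξ₁ ⬝ᵥ ξ₁) * (ξ₂ ⬝ᵥ ξ₂) * (u ⬝ᵥ A *ᵥ u) = 2 * c * (ξ₁ ⬝ᵥ u) * (ξ₂ ⬝ᵥ u) := by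
    rw [← dotProduct_smul_mulVec_self, hA, dotProduct_smul_mulVec_self,
      dotProduct_vecMulVec_add_mulVec_self]
    ring
  have h₂₃ : ξ₂ ⬝ᵥ ξ₃ = -(ξ₁ ⬝ᵥ ξ₃) := by
    rw [dotProduct_add, dotProduct_comm ξ₃, dotProduct_comm ξ₃] at h₃
    linarith
  have hv₁ : ξ₁ ⬝ᵥ (ξ₁ + ξ₂) = ξ₁ ⬝ᵥ ξ₁ := by rw [dotProduct_add, h₁₂, add_zero]
  have hv₂ : ξ₂ ⬝ᵥ (ξ₁ + ξ₂) = ξ₂ ⬝ᵥ ξ₂ := by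
    rw [dotProduct_add, dotProduct_comm, h₁₂, zero_add]
  have hQv := hQ (ξ₁ + ξ₂)
  have hQ₃ := hQ ξ₃
  have hE := dotProduct_mulVec_self_of_symA_eq_zero (by omega) hA₃ h₃
  have hB := sq_dotProduct_add_sq_dotProduct_le h₁₂ ξ₃
  rw [hv₁, hv₂] at hQv
  rw [add_dotProduct ξ₁ ξ₂ (ξ₁ + ξ₂), hv₁, hv₂] at hE
  rw [h₂₃] at hQ₃ hB
  have key : c * (((n : ℝ) - 1) * (ξ₁ ⬝ᵥ ξ₁) * (ξ₂ ⬝ᵥ ξ₂) * (ξ₃ ⬝ᵥ ξ₃)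
      - (ξ₁ ⬝ᵥ ξ₃) ^ 2 * (ξ₁ ⬝ᵥ ξ₁ + ξ₂ ⬝ᵥ ξ₂)) = 0 := by
    linear_combination ((ξ₁ ⬝ᵥ ξ₁) * (ξ₂ ⬝ᵥ ξ₂) * hE - ((n : ℝ) - 1) * (ξ₃ ⬝ᵥ ξ₃) * hQv
      - (ξ₁ ⬝ᵥ ξ₁ + ξ₂ ⬝ᵥ ξ₂) * hQ₃) / 2
  have hn' : (3 : ℝ) ≤ n := by exact_mod_cast hn
  have hs := mul_pos (mul_pos (dotProduct_self_pos hξ₁) (dotProduct_self_pos hξ₂))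
    (dotProduct_self_pos hξ₃)
  have hpos := mul_pos (by linarith : (0 : ℝ) < n - 2) hs
  exact (mul_eq_zero.1 key).resolve_right (by linarith)

end

theorem annihilator_codim_one_wave_cone_trivial_general {n : ℕ} (hn : 3 ≤ n)
    (A : Fin n → Fin n → ℝ)
    (h : ∀ v : Fin n → ℝ, ∃ ξ : Fin n → ℝ, ξ ≠ 0 ∧ dotp ξ v = 0 ∧
      ∀ i j, symA n ξ A i j = 0) :
    ∀ i j, A i j = 0 := by
  obtain ⟨ξ₁, hξ₁, -, hA₁⟩ := h 0
  obtain ⟨ξ₂, hξ₂, h₂₁, hA₂⟩ := h ξ₁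
  obtain ⟨ξ₃, hξ₃, h₃, hA₃⟩ := h (ξ₁ + ξ₂)
  have h₁₂ : ξ₁ ⬝ᵥ ξ₂ = 0 := (dotProduct_comm ξ₁ ξ₂).trans h₂₁
  have hA := smul_eq_vecMulVec_add_of_orthogonal hn (funext₂ hA₁) (funext₂ hA₂) h₁₂ hξ₁ hξ₂
  have hc := eq_zero_of_smul_eq_vecMulVec_add hn hξ₁ hξ₂ hξ₃ h₁₂ h₃ (funext₂ hA₃) hA
  rw [hc, zero_smul] at hA
  have hA₀ : (A : Matrix (Fin n) (Fin n) ℝ) = 0 := (smul_eq_zero.1 hA).resolve_left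
    (mul_pos (dotProduct_self_pos hξ₁) (dotProduct_self_pos hξ₂)).ne'
  exact fun i j => congrFun₂ hA₀ i j

/-- for `n ≥ 3`,
`⋂_{v ∈ ℝⁿ} ⋃_{ξ ∈ v^⊥ \ {0}} Ker 𝔸[ξ] = {0}` inside the symmetric trace-free matrices:
if for every `v` there is a nonzero `ξ ⊥ v` with `𝔸[ξ]A = 0`, then `A = 0`. -/
theorem annihilator_codim_one_wave_cone_trivial {n : ℕ} (hn : 3 ≤ n)
    (A : Fin n → Fin n → ℝ) (hsym : ∀ i j, A i j = A j i) (htr : ∑ i, A i i = 0)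
    (h : ∀ v : Fin n → ℝ, ∃ ξ : Fin n → ℝ, ξ ≠ 0 ∧ dotp ξ v = 0 ∧
      ∀ i j, symA n ξ A i j = 0) :
    ∀ i j, A i j = 0 :=
  annihilator_codim_one_wave_cone_trivial_general hn A h
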